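/- In a median graph G rooted at a vertex v0, an edge uv with d(v0,u) < d(v0,v) is closest to v0 within its Θ-class (i.e., v is the gate of v0 in the halfspace of the Θ-class not containing v0) if and only if u is the unique neighbor of v in I(v0,v). -/

import Mathlib

/-!
If `v` is the gate of `v0` in `W(v,u)`, a second neighbour `x` of `v` inside `I(v0,v)` would lie in
`W(v,u)` (median graphs are bipartite), and `v ∈ I(x,v0)` contradicts `x ∈ I(v0,v)`. Conversely, for
`x ∈ W(v,u)` let `m` be the median of `v0, v, x`. If `m ≠ v`, the first vertex after `v` on a geodesic
from `v` to `m` lies in `I(v0,v)`, so it is `u`; but it also lies in `I(v,x)`, so `u` is closer to `x`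
than `v` is, contradicting `x ∈ W(v,u)`. Hence `m = v`, i.e. `v ∈ I(x,v0)`.
-/

def interval {V : Type*} (G : SimpleGraph V) (u v : V) : Set V :=
  {x | G.dist u x + G.dist x v = G.dist u v}

def IsMedianGraph {V : Type*} (G : SimpleGraph V) : Prop :=
  G.Connected ∧ ∀ x y z : V,
    ∃! m : V, m ∈ interval G x y ∧ m ∈ interval G y z ∧ m ∈ interval G z x

def Wset {V : Type*} (G : SimpleGraph V) (u v : V) : Set V :=
  {x | G.dist u x < G.dist v x}

/-- `g` is the gate of `z` in the set `H`. -/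
def IsGate {V : Type*} (G : SimpleGraph V) (H : Set V) (z g : V) : Prop :=
  g ∈ H ∧ ∀ x ∈ H, g ∈ interval G x z

open SimpleGraph

section

variable {V : Type*} {G : SimpleGraph V}

lemma mem_interval {a b x : V} : x ∈ interval G a b ↔ G.dist a x + G.dist x b = G.dist a b :=
  Iff.rfl

lemma mem_wset {a b x : V} : x ∈ Wset G a b ↔ G.dist a x < G.dist b x :=
  Iff.rfl

lemma interval_comm (a b : V) : interval G a b = interval G b a := by
  ext x
  rw [mem_interval, mem_interval, dist_comm (u := b) (v := x), dist_comm (u := x) (v := a),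
    dist_comm (u := a) (v := b)]
  omega

lemma SimpleGraph.Connected.interval_subset_interval (hG : G.Connected) {a b m : V}
    (hm : m ∈ interval G a b) : interval G a m ⊆ interval G a b := by
  intro w hw
  have hwb : G.dist w b ≤ G.dist w m + G.dist m b := hG.dist_triangle
  have hab : G.dist a b ≤ G.dist a w + G.dist w b := hG.dist_triangle
  rw [mem_interval] at hm hw ⊢
  omega

lemma SimpleGraph.Connected.exists_adj_mem_interval (hG : G.Connected) {a b : V} (hab : a ≠ b) :
    ∃ w, G.Adj a w ∧ w ∈ interval G a b := by
  obtain ⟨p, hp⟩ := hG.exists_walk_length_eq_dist a b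
  cases p with
  | nil => exact absurd rfl hab
  | @cons _ w _ haw q =>
    refine ⟨w, haw, ?_⟩
    have hwb : G.dist w b ≤ q.length := dist_le q
    have hab : G.dist a b ≤ G.dist a w + G.dist w b := hG.dist_triangle
    rw [Walk.length_cons] at hp
    rw [mem_interval, dist_eq_one_iff_adj.mpr haw] at *
    omega

lemma SimpleGraph.Connected.eq_or_eq_of_mem_interval_of_adj (hG : G.Connected) {a b m : V}
    (hab : G.Adj a b) (hm : m ∈ interval G a b) : m = a ∨ m = b := by
  rw [mem_interval, dist_eq_one_iff_adj.mpr hab] at hm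
  rcases Nat.add_eq_one_iff.mp hm with ⟨ham, -⟩ | ⟨-, hmb⟩
  · exact .inl (hG.dist_eq_zero_iff.mp ham).symm
  · exact .inr (hG.dist_eq_zero_iff.mp hmb)

namespace IsMedianGraph

lemma dist_ne_dist_of_adj (hG : IsMedianGraph G) {a b : V} (hab : G.Adj a b) (c : V) :
    G.dist a c ≠ G.dist b c := by
  obtain ⟨m, ⟨hm_ab, hm_bc, hm_ca⟩, -⟩ := hG.2 a b c
  rcases hG.1.eq_or_eq_of_mem_interval_of_adj hab hm_ab with rfl | rfl
  · rw [mem_interval, dist_eq_one_iff_adj.mpr hab.symm] at hm_bc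
    omega
  · rw [mem_interval, dist_eq_one_iff_adj.mpr hab.symm, dist_comm (u := c), dist_comm (u := c)]
      at hm_ca
    omega

lemma mem_wset_of_adj (hG : IsMedianGraph G) {u v x : V} (huv : G.Adj u v) (hvx : G.Adj v x)
    (hxu : x ≠ u) : x ∈ Wset G v u := by
  have hne : G.dist u x ≠ G.dist v x := hG.dist_ne_dist_of_adj huv x
  have hux : G.dist u x ≠ 0 := hG.1.dist_eq_zero_iff.not.mpr hxu.symm
  rw [mem_wset, dist_eq_one_iff_adj.mpr hvx] at *
  omega

end IsMedianGraph

end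

theorem first_edge_characterization_general {V : Type*} (G : SimpleGraph V)
    (hG : IsMedianGraph G) (v0 u v : V) (huv : G.Adj u v) :
    IsGate G (Wset G v u) v0 v ↔
      (∀ x : V, G.Adj v x → x ∈ interval G v0 v → x = u) := by
  constructor
  · rintro ⟨-, hgate⟩ x hvx hx
    by_contra hxu
    have hv := hgate x (hG.mem_wset_of_adj huv hvx hxu)
    have hxv : G.dist x v = 1 := dist_eq_one_iff_adj.mpr hvx.symm
    rw [mem_interval] at hx hv
    rw [dist_comm (u := v), dist_comm (u := x) (v := v0)] at hv
    omega
  · intro hunique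
    refine ⟨by rw [mem_wset, dist_self]; exact hG.1.pos_dist_of_ne huv.ne, fun x hx => ?_⟩
    obtain ⟨m, ⟨hm_v0v, hm_vx, hm_xv0⟩, -⟩ := hG.2 v0 v x
    obtain rfl | hmv := eq_or_ne m v
    · exact hm_xv0
    obtain ⟨w, hvw, hw⟩ := hG.1.exists_adj_mem_interval hmv.symm
    have hwu : w = u := by
      refine hunique w hvw ?_
      rw [interval_comm] at hm_v0v ⊢
      exact hG.1.interval_subset_interval hm_v0v hw
    have hu_vx : u ∈ interval G v x := hwu ▸ hG.1.interval_subset_interval hm_vx hw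
    rw [mem_wset] at hx
    rw [mem_interval] at hu_vx
    omega

/-- For an edge `uv` with `d(v0,u) < d(v0,v)`, the halfspace of the `Θ`-class of `uv`
not containing `v0` is `W(v,u)`; the edge is closest to `v0` within its `Θ`-class
(`v` is the gate of `v0` in `W(v,u)`) iff `u` is the unique neighbor of `v` in `I(v0,v)`. -/
theorem first_edge_characterization {V : Type*} [Fintype V] (G : SimpleGraph V)
    (hG : IsMedianGraph G) (v0 u v : V) (huv : G.Adj u v)
    (hd : G.dist v0 u < G.dist v0 v) :
    IsGate G (Wset G v u) v0 v ↔
      (∀ x : V, G.Adj v x → x ∈ interval G v0 v → x = u) :=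
  first_edge_characterization_general G hG v0 u v huv
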